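/- Let a ∈ C_K with |a| > 1; set R = |a|^{−1/(p−1)}, μ = max(|p|, R), and S = μR³. Let m ≥ 1 be an integer and let x ∈ C_K with R < |x| ≤ R^{1−p^{−m}}. Then for every integer 0 ≤ i ≤ m: (i) |φ_a^i(x)| = R^{1−p^i} · |x|^{p^i} ≤ 1; and (ii) φ_a^i(D̄_S(x)) ⊆ D̄_{S'_i}(φ_a^i(x)), where S'_i = μ^i R^{−e_i} S with e_i = p^{1−m} + p^{2−m} + ⋯ + p^{i−m} (so e_0 = 0); moreover S'_i < μ^i R^{−2} S. -/

import Mathlib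

/-- The polynomial map `φ_a(z) = (1-a) z^(p+1) + a z^p`. -/
def phi {K : Type*} [Field K] (p : ℕ) (a : K) (z : K) : K :=
  (1 - a) * z ^ (p + 1) + a * z ^ p

/-!
Write `‖a‖ = R^(1-p)`. On `‖z‖ < 1` the term `a z^p` dominates `φ_a(z)`, so `‖φ_a(z)‖ = ‖a‖ ‖z‖^p`;
iterating gives the norm formula, and the hypothesis on `‖x‖` keeps `‖φ_a^i(x)‖ ≤ R^(1-p^(i-m)) < 1`
for `i < m`. For the disks, `φ_a(z) - φ_a(w)` is controlled by `‖z^p - w^p‖`, whose binomial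
expansion has all middle coefficients divisible by `p`: a disk of radius `δ ≤ μR` about a point of
norm `≤ R^(1-t)` is mapped into a disk of radius `μ R^(-tp) δ`. With `t = p^(i-m)` this multiplies
the radius by `μ R^(-p^(i+1-m))`, and the radii stay below `μR` because `e_i < 2`.
-/

open Finset

section Ultrametric

variable {K : Type*}

lemma norm_pow_sub_pow_le [NormedCommRing K] [NormOneClass K] [IsUltrametricDist K]
    {z w : K} {ρ : ℝ} (hz : ‖z‖ ≤ ρ) (hw : ‖w‖ ≤ ρ) (n : ℕ) :
    ‖z ^ n - w ^ n‖ ≤ ‖z - w‖ * ρ ^ (n - 1) := by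
  have hρ : 0 ≤ ρ := (norm_nonneg z).trans hz
  have hsum : ‖∑ i ∈ range n, z ^ i * w ^ (n - 1 - i)‖ ≤ ρ ^ (n - 1) := by
    refine IsUltrametricDist.norm_sum_le_of_forall_le_of_nonneg (by positivity) fun i hi => ?_
    calc ‖z ^ i * w ^ (n - 1 - i)‖ ≤ ‖z‖ ^ i * ‖w‖ ^ (n - 1 - i) :=
          (norm_mul_le _ _).trans
            (mul_le_mul (norm_pow_le _ _) (norm_pow_le _ _) (norm_nonneg _) (by positivity))
      _ ≤ ρ ^ i * ρ ^ (n - 1 - i) := by gcongr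
      _ = ρ ^ (n - 1) := by rw [← pow_add]; congr 1; have := mem_range.1 hi; omega
  calc ‖z ^ n - w ^ n‖ ≤ ‖∑ i ∈ range n, z ^ i * w ^ (n - 1 - i)‖ * ‖z - w‖ := by
        rw [← geom_sum₂_mul]; exact norm_mul_le _ _
    _ ≤ ‖z - w‖ * ρ ^ (n - 1) := by rw [mul_comm]; gcongr

lemma norm_choose_prime_le [NormedCommRing K] [NormOneClass K] [IsUltrametricDist K]
    {p k : ℕ} (hp : p.Prime) (hk0 : k ≠ 0) (hkp : k < p) :
    ‖(p.choose k : K)‖ ≤ ‖(p : K)‖ := by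
  obtain ⟨c, hc⟩ := hp.dvd_choose_self hk0 hkp
  rw [hc, Nat.cast_mul]
  exact (norm_mul_le _ _).trans
    (mul_le_of_le_one_right (norm_nonneg _) (IsUltrametricDist.norm_natCast_le_one K c))

lemma norm_pow_prime_sub_pow_le [NormedCommRing K] [NormOneClass K] [IsUltrametricDist K]
    {p : ℕ} (hp : p.Prime) {z w : K} {δ ρ : ℝ}
    (hzw : ‖z - w‖ ≤ δ) (hw : ‖w‖ ≤ ρ) (hδρ : δ ≤ ρ) :
    ‖z ^ p - w ^ p‖ ≤ max (δ ^ p) (‖(p : K)‖ * δ * ρ ^ (p - 1)) := by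
  have hδ : 0 ≤ δ := (norm_nonneg _).trans hzw
  have hexpand : z ^ p - w ^ p
      = ∑ k ∈ range p, (z - w) ^ (k + 1) * w ^ (p - (k + 1)) * (p.choose (k + 1) : K) := by
    rw [show z ^ p = ((z - w) + w) ^ p by ring_nf, add_pow, sum_range_succ']
    simp
  rw [hexpand]
  refine IsUltrametricDist.norm_sum_le_of_forall_le_of_nonneg
    ((by positivity : 0 ≤ δ ^ p).trans (le_max_left _ _)) fun k hk => ?_
  have hterm : ‖(z - w) ^ (k + 1) * w ^ (p - (k + 1)) * (p.choose (k + 1) : K)‖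
      ≤ δ ^ (k + 1) * ρ ^ (p - (k + 1)) * ‖(p.choose (k + 1) : K)‖ := by
    refine (norm_mul_le _ _).trans (mul_le_mul_of_nonneg_right ?_ (norm_nonneg _))
    refine (norm_mul_le _ _).trans (mul_le_mul ?_ ?_ (norm_nonneg _) (by positivity))
    · exact (norm_pow_le _ _).trans (pow_le_pow_left₀ (norm_nonneg _) hzw _)
    · exact (norm_pow_le _ _).trans (pow_le_pow_left₀ (norm_nonneg _) hw _)
  rcases (Nat.succ_le_of_lt (mem_range.1 hk)).eq_or_lt with hkp | hkp
  · refine le_max_of_le_left (hterm.trans (le_of_eq ?_))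
    rw [← hkp]
    simp
  · refine le_max_of_le_right (hterm.trans ?_)
    calc δ ^ (k + 1) * ρ ^ (p - (k + 1)) * ‖(p.choose (k + 1) : K)‖
        ≤ δ * ρ ^ k * ρ ^ (p - (k + 1)) * ‖(p : K)‖ := by
          have hρ : 0 ≤ ρ := hδ.trans hδρ
          gcongr ?_ * _ * ?_
          · rw [pow_succ']; gcongr
          · exact norm_choose_prime_le hp k.succ_ne_zero hkp
      _ = ‖(p : K)‖ * δ * ρ ^ (p - 1) := by
          rw [mul_assoc δ, ← pow_add, show k + (p - (k + 1)) = p - 1 by omega]; ring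

lemma norm_one_sub_le_of_one_le [SeminormedRing K] [NormOneClass K] [IsUltrametricDist K]
    {a : K} (ha : 1 ≤ ‖a‖) : ‖1 - a‖ ≤ ‖a‖ := by
  simpa [sub_eq_add_neg, ha] using IsUltrametricDist.norm_add_le_max (1 : K) (-a)

variable [NormedField K] [IsUltrametricDist K] {p : ℕ} {a : K}

lemma norm_phi_of_norm_lt_one (ha : 1 ≤ ‖a‖) {z : K} (hz : ‖z‖ < 1) :
    ‖phi p a z‖ = ‖a‖ * ‖z‖ ^ p := by
  have hsmall : ‖(1 - a) * z‖ < ‖a‖ :=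
    calc ‖(1 - a) * z‖ ≤ ‖a‖ * ‖z‖ := by
          rw [norm_mul]
          exact mul_le_mul_of_nonneg_right (norm_one_sub_le_of_one_le ha) (norm_nonneg _)
      _ < ‖a‖ := mul_lt_of_lt_one_right (by linarith) hz
  have hfactor : phi p a z = z ^ p * (a + (1 - a) * z) := by unfold phi; ring
  rw [hfactor, norm_mul, norm_pow, IsUltrametricDist.norm_add_eq_max_of_norm_ne_norm hsmall.ne',
    max_eq_left hsmall.le, mul_comm]

lemma norm_phi_sub_phi_le (hp : p.Prime) (ha : 1 ≤ ‖a‖) {z w : K} {δ ρ : ℝ}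
    (hzw : ‖z - w‖ ≤ δ) (hw : ‖w‖ ≤ ρ) (hδρ : δ ≤ ρ) :
    ‖phi p a z - phi p a w‖
      ≤ ‖a‖ * max (δ * ρ ^ p) (max (δ ^ p) (‖(p : K)‖ * δ * ρ ^ (p - 1))) := by
  have hz : ‖z‖ ≤ ρ := by
    rw [← sub_add_cancel z w]
    exact (IsUltrametricDist.norm_add_le_max _ _).trans (max_le (hzw.trans hδρ) hw)
  have hsplit : phi p a z - phi p a w
      = (1 - a) * (z ^ (p + 1) - w ^ (p + 1)) + a * (z ^ p - w ^ p) := by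
    unfold phi; ring
  rw [hsplit, mul_max_of_nonneg _ _ (norm_nonneg a)]
  refine (IsUltrametricDist.norm_add_le_max _ _).trans (max_le_max ?_ ?_)
  · rw [norm_mul]
    refine mul_le_mul (norm_one_sub_le_of_one_le ha) ?_ (norm_nonneg _) (norm_nonneg a)
    refine (norm_pow_sub_pow_le hz hw (p + 1)).trans ?_
    rw [Nat.add_sub_cancel]
    have hρ : 0 ≤ ρ := (norm_nonneg _).trans hw
    gcongr
  · rw [norm_mul]
    exact mul_le_mul_of_nonneg_left (norm_pow_prime_sub_pow_le hp hzw hw hδρ) (norm_nonneg a)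

end Ultrametric

lemma rpow_neg_one_div_sub_one_rpow_one_sub {A q : ℝ} (hA : 0 < A) (hq : q ≠ 1) :
    (A ^ (-1 / (q - 1))) ^ (1 - q) = A := by
  have hq' : q - 1 ≠ 0 := sub_ne_zero.2 hq
  rw [← Real.rpow_mul hA.le, show -1 / (q - 1) * (1 - q) = 1 by field_simp; ring, Real.rpow_one]

lemma rpow_one_sub_mul_rpow_le {R q y : ℝ} (hR : 0 < R) (hq : 0 < q) (hy : 0 ≤ y) {m : ℕ}
    (hyR : y ≤ R ^ (1 - q ^ (-(m : ℤ)))) (i : ℕ) :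
    R ^ (1 - q ^ i) * y ^ (q ^ i) ≤ R ^ (1 - q ^ ((i : ℤ) - m)) := by
  have hq' : q ^ ((i : ℤ) - m) = q ^ (-(m : ℤ)) * q ^ i := by
    rw [sub_eq_neg_add, zpow_add₀ hq.ne', zpow_natCast]
  calc R ^ (1 - q ^ i) * y ^ (q ^ i)
        ≤ R ^ (1 - q ^ i) * (R ^ (1 - q ^ (-(m : ℤ)))) ^ (q ^ i) := by gcongr
    _ = R ^ (1 - q ^ ((i : ℤ) - m)) := by
        rw [← Real.rpow_mul hR.le, ← Real.rpow_add hR, hq']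
        ring_nf

/-- The exponent `e_i = p^(1-m) + ⋯ + p^(i-m)` in the radius `μ^i R^(-e_i) S` of the image disks. -/
noncomputable def diskExponent (p m i : ℕ) : ℝ :=
  ∑ j ∈ range i, (p : ℝ) ^ ((j : ℤ) + 1 - (m : ℤ))

lemma diskExponent_succ {p : ℕ} (hp : p ≠ 0) (m i : ℕ) :
    diskExponent p m (i + 1) = diskExponent p m i + (p : ℝ) ^ ((i : ℤ) - m) * p := by
  rw [diskExponent, diskExponent, sum_range_succ, ← zpow_add_one₀ (by exact_mod_cast hp)]
  congr 2
  ring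

lemma diskExponent_lt_two {p m i : ℕ} (hp : 2 ≤ p) (hi : i ≤ m) : diskExponent p m i < 2 := by
  have hp2 : (2 : ℝ) ≤ p := by exact_mod_cast hp
  have hp1 : (1 : ℝ) < p := by linarith
  have hp0 : (p : ℝ) ≠ 0 := by positivity
  have hfactor : diskExponent p m i = (p : ℝ) ^ (1 - (m : ℤ)) * ∑ j ∈ range i, (p : ℝ) ^ j := by
    rw [diskExponent, mul_sum]
    refine sum_congr rfl fun j _ => ?_
    rw [← zpow_natCast, ← zpow_add₀ hp0]
    ring_nf
  have hmul : diskExponent p m i * (p - 1) < 2 * (p - 1) :=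
    calc diskExponent p m i * (p - 1) = (p : ℝ) ^ (1 - (m : ℤ)) * ((p : ℝ) ^ i - 1) := by
          rw [hfactor, mul_assoc, geom_sum_mul]
      _ < (p : ℝ) ^ (1 - (m : ℤ)) * (p : ℝ) ^ i := by gcongr; linarith
      _ = (p : ℝ) ^ ((1 : ℤ) - (m - i : ℕ)) := by
          rw [← zpow_natCast, ← zpow_add₀ hp0, Nat.cast_sub hi]; ring_nf
      _ ≤ (p : ℝ) ^ (1 : ℤ) := zpow_le_zpow_right₀ hp1.le (by omega)
      _ ≤ 2 * (p - 1) := by rw [zpow_one]; linarith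
  exact lt_of_mul_lt_mul_right hmul (by linarith)

section Iterates

variable {K : Type*} [NormedField K] [IsUltrametricDist K] {p : ℕ} {a : K} {R : ℝ}

lemma norm_iterate_phi_eq (hp : 1 < p) (ha : 1 ≤ ‖a‖) (hA : ‖a‖ = R ^ (1 - (p : ℝ)))
    (hR0 : 0 < R) (hR1 : R < 1) {m : ℕ} {x : K} (hx : ‖x‖ ≤ R ^ (1 - (p : ℝ) ^ (-(m : ℤ)))) :
    ∀ i ≤ m, ‖(phi p a)^[i] x‖ = R ^ (1 - (p : ℝ) ^ i) * ‖x‖ ^ ((p : ℝ) ^ i) := by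
  have hp0 : (0 : ℝ) < p := by positivity
  intro i
  induction i with
  | zero => simp
  | succ i ih =>
    intro hi
    have hnorm := ih (by omega)
    have hlt : ‖(phi p a)^[i] x‖ < 1 := by
      rw [hnorm]
      refine (rpow_one_sub_mul_rpow_le hR0 hp0 (norm_nonneg x) hx i).trans_lt
        (Real.rpow_lt_one hR0.le hR1 (sub_pos.2 ?_))
      exact zpow_lt_one_of_neg₀ (by exact_mod_cast hp) (by omega)
    rw [Function.iterate_succ_apply', norm_phi_of_norm_lt_one ha hlt, hnorm, hA, mul_pow,
      ← Real.rpow_mul_natCast hR0.le, ← Real.rpow_mul_natCast (norm_nonneg x), ← mul_assoc,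
      ← Real.rpow_add hR0, pow_succ]
    ring_nf

lemma norm_phi_sub_phi_le_mul (hp : p.Prime) (ha : 1 ≤ ‖a‖) (hA : ‖a‖ = R ^ (1 - (p : ℝ)))
    (hR0 : 0 < R) {μ : ℝ} (hRμ : R ≤ μ) (hpμ : ‖(p : K)‖ ≤ μ) (hμ1 : μ ≤ 1)
    {t δ : ℝ} (ht : 0 ≤ t) (hδ : δ ≤ μ * R) {z w : K}
    (hw : ‖w‖ ≤ R ^ (1 - t)) (hzw : ‖z - w‖ ≤ δ) :
    ‖phi p a z - phi p a w‖ ≤ μ * R ^ (-(t * p)) * δ := by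
  have hR1 : R ≤ 1 := hRμ.trans hμ1
  have hδ0 : 0 ≤ δ := (norm_nonneg _).trans hzw
  have hμ0 : 0 ≤ μ := hR0.le.trans hRμ
  have hp1 : 1 ≤ p := hp.one_lt.le
  have hgrow : 1 ≤ R ^ (-(t * p)) :=
    Real.one_le_rpow_of_pos_of_le_one_of_nonpos hR0 hR1 (neg_nonpos.2 (by positivity))
  have hδρ : δ ≤ R ^ (1 - t) :=
    calc δ ≤ 1 * R := hδ.trans (by gcongr)
      _ = R ^ (1 : ℝ) := by rw [one_mul, Real.rpow_one]
      _ ≤ R ^ (1 - t) := Real.rpow_le_rpow_of_exponent_ge hR0 hR1 (by linarith)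
  refine (norm_phi_sub_phi_le hp ha hzw hw hδρ).trans ?_
  rw [mul_max_of_nonneg _ _ (norm_nonneg a), mul_max_of_nonneg _ _ (norm_nonneg a)]
  refine max_le ?_ (max_le ?_ ?_)
  · calc ‖a‖ * (δ * (R ^ (1 - t)) ^ p) = R ^ (1 - (p : ℝ) + (1 - t) * p) * δ := by
          rw [hA, ← Real.rpow_mul_natCast hR0.le, Real.rpow_add hR0]; ring
      _ = R * R ^ (-(t * p)) * δ := by
          rw [show 1 - (p : ℝ) + (1 - t) * p = 1 + -(t * p) by ring, Real.rpow_add hR0,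
            Real.rpow_one]
      _ ≤ μ * R ^ (-(t * p)) * δ := by gcongr
  · calc ‖a‖ * δ ^ p = R ^ (1 - (p : ℝ)) * δ ^ (p - 1) * δ := by
          rw [hA, mul_assoc, ← pow_succ, Nat.sub_add_cancel hp1]
      _ ≤ R ^ (1 - (p : ℝ)) * (μ * R) ^ (p - 1) * δ := by gcongr
      _ = μ ^ (p - 1) * δ := by
          rw [mul_pow, ← Real.rpow_natCast R, mul_left_comm, ← Real.rpow_add hR0,
            Nat.cast_sub hp1]
          simp
      _ ≤ μ * R ^ (-(t * p)) * δ := by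
          gcongr
          calc μ ^ (p - 1) ≤ μ := pow_le_of_le_one hμ0 hμ1 (by have := hp.two_le; omega)
            _ ≤ μ * R ^ (-(t * p)) := le_mul_of_one_le_right hμ0 hgrow
  · calc ‖a‖ * (‖(p : K)‖ * δ * (R ^ (1 - t)) ^ (p - 1))
        ≤ R ^ (1 - (p : ℝ)) * (μ * δ * (R ^ (1 - t)) ^ (p - 1)) := by rw [hA]; gcongr
      _ = μ * R ^ (1 - (p : ℝ) + (1 - t) * (p - 1 : ℕ)) * δ := by
          rw [← Real.rpow_mul_natCast hR0.le, Real.rpow_add hR0]; ring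
      _ = μ * (R ^ (-(t * p)) * R ^ t) * δ := by
          rw [Nat.cast_sub hp1, Nat.cast_one, ← Real.rpow_add hR0]
          ring_nf
      _ ≤ μ * R ^ (-(t * p)) * δ := by
          gcongr
          exact mul_le_of_le_one_right (by positivity) (Real.rpow_le_one hR0.le hR1 ht)

lemma norm_iterate_phi_sub_le (hp : p.Prime) (ha : 1 ≤ ‖a‖) (hA : ‖a‖ = R ^ (1 - (p : ℝ)))
    (hR0 : 0 < R) (hR1 : R < 1) {μ : ℝ} (hRμ : R ≤ μ) (hpμ : ‖(p : K)‖ ≤ μ) (hμ1 : μ ≤ 1)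
    {m : ℕ} {x : K} (hx : ‖x‖ ≤ R ^ (1 - (p : ℝ) ^ (-(m : ℤ))))
    {S : ℝ} (hS : S ≤ μ * R ^ 3) {z : K} (hz : ‖z - x‖ ≤ S) :
    ∀ i ≤ m, ‖(phi p a)^[i] z - (phi p a)^[i] x‖ ≤ μ ^ i * R ^ (-diskExponent p m i) * S := by
  have hμ0 : 0 ≤ μ := hR0.le.trans hRμ
  have hS0 : 0 ≤ S := (norm_nonneg _).trans hz
  intro i
  induction i with
  | zero => simpa [diskExponent] using hz
  | succ i ih =>
    intro hi
    set t : ℝ := (p : ℝ) ^ ((i : ℤ) - m)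
    have hw : ‖(phi p a)^[i] x‖ ≤ R ^ (1 - t) := by
      rw [norm_iterate_phi_eq hp.one_lt ha hA hR0 hR1 hx i (by omega)]
      exact rpow_one_sub_mul_rpow_le hR0 (by exact_mod_cast hp.pos) (norm_nonneg x) hx i
    have hδ : μ ^ i * R ^ (-diskExponent p m i) * S ≤ μ * R :=
      calc μ ^ i * R ^ (-diskExponent p m i) * S
          ≤ 1 * R ^ (-diskExponent p m i) * (μ * R ^ 3) := by
            gcongr
            exact pow_le_one₀ hμ0 hμ1
        _ = μ * R ^ (3 - diskExponent p m i) := by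
            rw [Real.rpow_sub hR0, Real.rpow_neg hR0.le, Real.rpow_ofNat]; ring
        _ ≤ μ * R ^ (1 : ℝ) :=
            mul_le_mul_of_nonneg_left (Real.rpow_le_rpow_of_exponent_ge hR0 hR1.le
              (by linarith [diskExponent_lt_two hp.two_le (show i ≤ m by omega)])) hμ0
        _ = μ * R := by rw [Real.rpow_one]
    rw [Function.iterate_succ_apply', Function.iterate_succ_apply']
    refine (norm_phi_sub_phi_le_mul hp ha hA hR0 hRμ hpμ hμ1 (by positivity) hδ hw
      (ih (by omega))).trans (le_of_eq ?_)
    rw [diskExponent_succ hp.ne_zero, neg_add, Real.rpow_add hR0, pow_succ]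
    ring

end Iterates

theorem phi_iterate_shrinking_disk_general
    {K : Type*} [NontriviallyNormedField K] [IsUltrametricDist K]
    (p : ℕ) (hp : p.Prime)
    (a : K) (ha : 1 < ‖a‖) (R μ S : ℝ)
    (hR : R = ‖a‖ ^ (-(1 : ℝ) / ((p : ℝ) - 1)))
    (hμ : μ = max ‖(p : K)‖ R) (hS : S = μ * R ^ 3)
    (m : ℕ) (x : K)
    (hx₂ : ‖x‖ ≤ R ^ ((1 : ℝ) - (p : ℝ) ^ (-(m : ℤ)))) :
    ∀ i ≤ m,
      ‖(phi p a)^[i] x‖ = R ^ ((1 : ℝ) - (p : ℝ) ^ i) * ‖x‖ ^ ((p : ℝ) ^ i) ∧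
      ‖(phi p a)^[i] x‖ ≤ 1 ∧
      (phi p a)^[i] '' Metric.closedBall x S ⊆
        Metric.closedBall ((phi p a)^[i] x)
          (μ ^ i * R ^ (-(∑ j ∈ Finset.range i, (p : ℝ) ^ ((j : ℤ) + 1 - (m : ℤ)))) * S) ∧
      μ ^ i * R ^ (-(∑ j ∈ Finset.range i, (p : ℝ) ^ ((j : ℤ) + 1 - (m : ℤ)))) * S <
        μ ^ i * R ^ (-(2 : ℝ)) * S := by
  have hp1 : (1 : ℝ) < p := by exact_mod_cast hp.one_lt
  have ha0 : 0 < ‖a‖ := one_pos.trans ha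
  have hR0 : 0 < R := hR ▸ Real.rpow_pos_of_pos ha0 _
  have hR1 : R < 1 := hR ▸ Real.rpow_lt_one_of_one_lt_of_neg ha
    (div_neg_of_neg_of_pos (by norm_num) (by linarith))
  have hA : ‖a‖ = R ^ (1 - (p : ℝ)) :=
    hR ▸ (rpow_neg_one_div_sub_one_rpow_one_sub ha0 hp1.ne').symm
  have hRμ : R ≤ μ := hμ ▸ le_max_right _ _
  have hpμ : ‖(p : K)‖ ≤ μ := hμ ▸ le_max_left _ _
  have hμ1 : μ ≤ 1 := hμ ▸ max_le (IsUltrametricDist.norm_natCast_le_one K p) hR1.le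
  intro i hi
  have hnorm := norm_iterate_phi_eq hp.one_lt ha.le hA hR0 hR1 hx₂ i hi
  refine ⟨hnorm, ?_, ?_, ?_⟩
  · rw [hnorm]
    refine (rpow_one_sub_mul_rpow_le hR0 (by linarith) (norm_nonneg x) hx₂ i).trans
      (Real.rpow_le_one hR0.le hR1.le (sub_nonneg.2 ?_))
    exact zpow_le_one_of_nonpos₀ hp1.le (by omega)
  · rintro _ ⟨z, hz, rfl⟩
    rw [Metric.mem_closedBall, dist_eq_norm] at hz ⊢
    exact norm_iterate_phi_sub_le hp ha.le hA hR0 hR1 hRμ hpμ hμ1 hx₂ hS.le hz i hi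
  · have hμ0 : 0 < μ := hR0.trans_le hRμ
    have hS0 : 0 < S := hS ▸ by positivity
    have he := diskExponent_lt_two hp.two_le hi
    exact mul_lt_mul_of_pos_right (mul_lt_mul_of_pos_left
      (Real.rpow_lt_rpow_of_exponent_gt hR0 hR1 (neg_lt_neg he)) (pow_pos hμ0 i)) hS0

/-- Lemma on the behavior of iterates of `φ_a` just outside `D̄_R(0)`:
`|φ_a^i(x)| = R^{1-p^i}|x|^{p^i} ≤ 1` and `φ_a^i(D̄_S(x)) ⊆ D̄_{S'_i}(φ_a^i(x))`
with `S'_i = μ^i R^{-e_i} S < μ^i R^{-2} S`, where `e_i = p^{1-m} + ⋯ + p^{i-m}`. -/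
theorem phi_iterate_shrinking_disk
    {K : Type*} [NontriviallyNormedField K] [IsUltrametricDist K]
    [CompleteSpace K] [IsAlgClosed K]
    (p : ℕ) (hp : p.Prime) (hpK : ‖(p : K)‖ < 1)
    (a : K) (ha : 1 < ‖a‖) (R μ S : ℝ)
    (hR : R = ‖a‖ ^ (-(1 : ℝ) / ((p : ℝ) - 1)))
    (hμ : μ = max ‖(p : K)‖ R) (hS : S = μ * R ^ 3)
    (m : ℕ) (hm : 1 ≤ m) (x : K)
    (hx₁ : R < ‖x‖) (hx₂ : ‖x‖ ≤ R ^ ((1 : ℝ) - (p : ℝ) ^ (-(m : ℤ)))) :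
    ∀ i ≤ m,
      ‖(phi p a)^[i] x‖ = R ^ ((1 : ℝ) - (p : ℝ) ^ i) * ‖x‖ ^ ((p : ℝ) ^ i) ∧
      ‖(phi p a)^[i] x‖ ≤ 1 ∧
      (phi p a)^[i] '' Metric.closedBall x S ⊆
        Metric.closedBall ((phi p a)^[i] x)
          (μ ^ i * R ^ (-(∑ j ∈ Finset.range i, (p : ℝ) ^ ((j : ℤ) + 1 - (m : ℤ)))) * S) ∧
      μ ^ i * R ^ (-(∑ j ∈ Finset.range i, (p : ℝ) ^ ((j : ℤ) + 1 - (m : ℤ)))) * S <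
        μ ^ i * R ^ (-(2 : ℝ)) * S :=
  phi_iterate_shrinking_disk_general p hp a ha R μ S hR hμ hS m x hx₂
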